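/- If f^{n+1}_{i,k} is defined by the implicit relaxation upwind scheme f^{n+1}_{i,k} = f̄_i(v_k) − (Δt/Δx) v_k⁺ (f̄_i(v_k) − f̄_{i−1}(v_k)) − (Δt/Δx) v_k⁻ (f̄_{i+1}(v_k) − f̄_i(v_k)) + (Δt/τ)(M_k − f^{n+1}_{i,k}), where f̄_{i−1}, f̄_i, f̄_{i+1} are nonnegative functions, M_k ≥ 0, τ > 0, and the CFL condition Δt |v_k| ≤ Δx holds, then f^{n+1}_{i,k} ≥ 0. -/
import Mathlib

theorem implicit_upwind_nonneg (Δt Δx τ vk fnew Mk : ℝ)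
    (fim1 fi fip1 : ℝ → ℝ)
    (hfim1 : ∀ v, 0 ≤ fim1 v) (hfi : ∀ v, 0 ≤ fi v) (hfip1 : ∀ v, 0 ≤ fip1 v)
    (hMk : 0 ≤ Mk) (hΔt : 0 < Δt) (hΔx : 0 < Δx) (hτ : 0 < τ)
    (hCFL : Δt * |vk| ≤ Δx)
    (hscheme : fnew = fi vk - (Δt / Δx) * max vk 0 * (fi vk - fim1 vk)
        - (Δt / Δx) * min vk 0 * (fip1 vk - fi vk) + (Δt / τ) * (Mk - fnew)) :
    0 ≤ fnew := by
  have habs : |vk| = max vk 0 - min vk 0 := by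
    rcases le_total vk 0 with h | h
    · simp [abs_of_nonpos h, max_eq_right h, min_eq_left h]
    · simp [abs_of_nonneg h, max_eq_left h, min_eq_right h]
  have hmax : 0 ≤ max vk 0 := le_max_right _ _
  have hmin : min vk 0 ≤ 0 := min_le_right _ _
  rw [habs] at hCFL
  have h1 := hfim1 vk; have h2 := hfi vk; have h3 := hfip1 vk
  field_simp at hscheme
  nlinarith [mul_nonneg hmax h1, mul_nonneg (neg_nonneg.mpr hmin) h3,
    mul_nonneg (sub_nonneg.mpr hCFL) h2, mul_pos hΔx hτ, mul_pos hΔt hΔx,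
    mul_nonneg (mul_nonneg hΔt.le hmax) h1,
    mul_nonneg (mul_nonneg hΔt.le (neg_nonneg.mpr hmin)) h3,
    mul_nonneg hτ.le (mul_nonneg (sub_nonneg.mpr hCFL) h2),
    mul_nonneg hΔt.le hMk, mul_nonneg (mul_nonneg hΔx.le hΔt.le) hMk]
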